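/- arXiv:1106.5190 — 5 statements merged into one kernel-verified Lean document; each statement's English description precedes it below -/
import Mathlib

section
/- Let k be a field of characteristic p > 0, n ≥ 1, and R a subalgebra of the polynomial ring k[X] = k[x₁,…,xₙ]. If the Jacobian ideal J(R) is a principal ideal of k[X], then J(R)^q ⊆ R[X^p], where q = p^n(p−1)/2, i.e. every product of q elements of J(R) lies in the subalgebra R[x₁^p,…,xₙ^p] of k[X] generated by R together with x₁^p,…,xₙ^p. -/
open MvPolynomial

/-- The Jacobian of an `n`-tuple of polynomials in `n` variables. -/
noncomputable def jac {k : Type*} [CommRing k] {n : ℕ}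
    (F : Fin n → MvPolynomial (Fin n) k) : MvPolynomial (Fin n) k :=
  (Matrix.of fun i j : Fin n => pderiv j (F i)).det

/-- The Jacobian ideal of a subalgebra `R` of `k[X]`: the ideal generated by all
Jacobians of `n`-tuples of elements of `R`. -/
noncomputable def jacIdeal {k : Type*} [CommRing k] {n : ℕ}
    (R : Subalgebra k (MvPolynomial (Fin n) k)) : Ideal (MvPolynomial (Fin n) k) :=
  Ideal.span {g | ∃ F : Fin n → MvPolynomial (Fin n) k, (∀ i, F i ∈ R) ∧ g = jac F}

/-- `R[X^p]`: the subalgebra of `k[X]` generated by `R` together with `x₁^p, …, xₙ^p`. -/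
noncomputable def RXp {k : Type*} [CommRing k] {n : ℕ} (p : ℕ)
    (R : Subalgebra k (MvPolynomial (Fin n) k)) : Subalgebra k (MvPolynomial (Fin n) k) :=
  Algebra.adjoin k ((R : Set (MvPolynomial (Fin n) k)) ∪
    Set.range fun i : Fin n => (X i : MvPolynomial (Fin n) k) ^ p)

/-!
Let `A = k[X^p]` and `q = p^n (p-1)/2`. Over `A`, `k[X]` is spanned by the reduced monomials
`X^b`, `b ∈ {0,…,p-1}^n`. Given `F ∈ R^n`, write `F^a = ∑_b M_{ab} X^b` with `M` over `A`.
Cramer's rule gives `det M • k[X] ⊆ R[X^p]`, so it suffices to show `det M = jac(F)^q`.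

Let `W(F)` be the matrix of coefficients of the reduced monomials `ε^c` in `F(X + ε)^a`. Elements
of `A` are constants modulo `(ε_l^p)`, so `W(F) = M · W(X)`. Writing `F(X + ε) = F + u`, the
binomial formula factors `W(F)` as a triangular matrix of determinant `1` times the matrix of
coefficients of the `u^i`. Up to order `2` in `ε`, `u` is the linear substitution by the Jacobian
matrix `J`; by block triangularity in the degree, the last determinant is that of the action of `J`
on `k[ε]/(ε_l^p)`. This is `det J ^ q`: it is multiplicative in `J` (in characteristic `p` the
substitution preserves `(ε_l^p)`), it can be computed on diagonal matrices, and it is `1` on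
transvections, which have order `p`.

Finally, if `J(R) = (h)` then every generator is `jac F = h u_F`, and the `u_F` generate the unit
ideal. Hence `J(R)^q = (h^q)` is generated by the `jac(F)^q`.
-/

open Finset Matrix Pointwise

noncomputable section

namespace Ideal

variable {S : Type*} [CommRing S]

theorem span_image_pow_of_isPrincipal [IsDomain S] {G : Set S} (hne : G.Nonempty)
    (hG : (span G).IsPrincipal) (q : ℕ) : span ((· ^ q) '' G) = span G ^ q := by
  obtain ⟨h, hh⟩ := hG.principal
  rw [submodule_span_eq] at hh
  set U := {u | h * u ∈ G}
  have hGU : G = ({h} : Set S) * U := by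
    ext g
    rw [Set.singleton_mul]
    refine ⟨fun hg => ?_, fun ⟨u, hu, hgu⟩ => hgu ▸ hu⟩
    obtain ⟨u, rfl⟩ := mem_span_singleton'.mp (hh ▸ subset_span hg : g ∈ span {h})
    exact ⟨u, by rwa [Set.mem_ofPred, mul_comm], mul_comm _ _⟩
  have hU : span U = ⊤ := by
    rcases eq_or_ne h 0 with rfl | hh0
    · obtain ⟨g, hg⟩ := hne
      have hg0 : g = 0 := by simpa [hh] using (subset_span hg : g ∈ span G)
      exact eq_top_of_isUnit_mem _ (subset_span (by simpa [U, hg0] using hg)) isUnit_one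
    · have hmem : h ∈ span {h} * span U := by
        rw [span_mul_span', ← hGU, hh]
        exact mem_span_singleton_self h
      obtain ⟨u, hu, hhu⟩ := mem_span_singleton_mul.mp hmem
      rwa [mul_eq_left₀ hh0 |>.mp hhu, ← eq_top_iff_one] at hu
  calc span ((· ^ q) '' G) = span {h ^ q} * span ((· ^ q) '' U) := by
        rw [span_mul_span', hGU, ← Set.image_singleton (f := (· ^ q))]
        exact congrArg span (Set.image_mul (powMonoidHom q : S →* S))
    _ = span G ^ q := by rw [span_pow_eq_top U hU, mul_top, hh, span_singleton_pow]

variable {I : Ideal S} {κ : Type*}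

theorem prod_mem_pow_card {t : Finset κ} {x : κ → S} (hx : ∀ k ∈ t, x k ∈ I) :
    ∏ k ∈ t, x k ∈ I ^ #t := by
  simpa using prod_mem_prod (I := fun _ => I) hx

theorem prod_pow_mem_pow_sum {s : Finset κ} {x : κ → S} (hx : ∀ j ∈ s, x j ∈ I) (m : κ → ℕ) :
    ∏ j ∈ s, x j ^ m j ∈ I ^ ∑ j ∈ s, m j := by
  rw [← prod_pow_eq_pow_sum]
  exact prod_mem_prod fun j hj => pow_mem_pow (hx j hj) _

theorem prod_sub_prod_mem_pow_card_succ {t : Finset κ} {x y : κ → S}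
    (hy : ∀ k ∈ t, y k ∈ I) (hxy : ∀ k ∈ t, x k - y k ∈ I ^ 2) :
    ∏ k ∈ t, x k - ∏ k ∈ t, y k ∈ I ^ (#t + 1) := by
  classical
  induction t using Finset.induction_on with
  | empty => simp
  | insert a t ha ih =>
    rw [prod_insert ha, prod_insert ha, card_insert_of_notMem ha]
    have hx : ∀ k ∈ t, x k ∈ I := fun k hk => by
      simpa using add_mem (pow_le_self two_ne_zero (hxy k (mem_insert_of_mem hk)))
        (hy k (mem_insert_of_mem hk))
    have e : x a * ∏ k ∈ t, x k - y a * ∏ k ∈ t, y k =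
        (x a - y a) * ∏ k ∈ t, x k + y a * (∏ k ∈ t, x k - ∏ k ∈ t, y k) := by ring
    rw [e]
    refine add_mem ?_ ?_
    · have h := mul_mem_mul (hxy a (mem_insert_self a t)) (prod_mem_pow_card hx)
      rw [← pow_add] at h
      exact pow_le_pow_right (by omega) h
    · have h := mul_mem_mul (hy a (mem_insert_self a t))
        (ih (fun k hk => hy k (mem_insert_of_mem hk)) (fun k hk => hxy k (mem_insert_of_mem hk)))
      rwa [← pow_succ'] at h

theorem prod_pow_sub_prod_pow_mem_pow_sum_succ {s : Finset κ} {x y : κ → S}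
    (hy : ∀ j ∈ s, y j ∈ I) (hxy : ∀ j ∈ s, x j - y j ∈ I ^ 2) (m : κ → ℕ) :
    ∏ j ∈ s, x j ^ m j - ∏ j ∈ s, y j ^ m j ∈ I ^ (∑ j ∈ s, m j + 1) := by
  have hsigma : ∀ z : κ → S, ∏ j ∈ s, z j ^ m j = ∏ k ∈ s.sigma fun j => range (m j), z k.1 := by
    simp [prod_sigma]
  have hcard : ∑ j ∈ s, m j = #(s.sigma fun j => range (m j)) := by simp
  rw [hsigma, hsigma, hcard]
  exact prod_sub_prod_mem_pow_card_succ (fun k hk => hy k.1 (mem_sigma.mp hk).1)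
    (fun k hk => hxy k.1 (mem_sigma.mp hk).1)

end Ideal

theorem add_pow_eq_sum_fin {R : Type*} [CommSemiring R] (x y : R) {a N : ℕ} (h : a < N) :
    (x + y) ^ a = ∑ r : Fin N, (a.choose r * x ^ (a - r)) * y ^ (r : ℕ) := by
  rw [add_comm, add_pow, Fin.sum_univ_eq_sum_range (fun r => (a.choose r * x ^ (a - r)) * y ^ r)]
  refine (sum_subset (range_subset_range.mpr h) fun r _ hr => ?_).trans
    (sum_congr rfl fun _ _ => by ring)
  rw [Nat.choose_eq_zero_of_lt (by simpa using hr), Nat.cast_zero, mul_zero]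

theorem sum_val_apply_eq {σ : Type*} [Fintype σ] [DecidableEq σ] {p : ℕ} (j : σ) :
    ∑ e : σ → Fin p, (e j : ℕ) = p ^ Fintype.card σ * (p - 1) / 2 := by
  -- reversing every coordinate pairs `e j` with `p - 1 - e j`
  have hrev : ∑ e : σ → Fin p, ((e j).rev : ℕ) = ∑ e : σ → Fin p, (e j : ℕ) :=
    Fintype.sum_equiv (Equiv.piCongrRight fun _ : σ => (Fin.revPerm : Equiv.Perm (Fin p))) _ _
      fun _ => rfl
  have hsum : ∑ e : σ → Fin p, ((e j : ℕ) + (e j).rev) = p ^ Fintype.card σ * (p - 1) := by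
    simp_rw [Fin.val_rev]
    rw [sum_congr rfl fun e _ => show (e j : ℕ) + (p - (e j + 1)) = p - 1 by omega]
    simp
  rw [sum_add_distrib, hrev] at hsum
  omega

namespace Matrix

theorem BlockTriangular.det_eq_of_blocks_eq {ι R α : Type*} [CommRing R] [Fintype ι]
    [DecidableEq ι] [LinearOrder α] {M N : Matrix ι ι R} {b : ι → α} (hM : M.BlockTriangular b)
    (hN : N.BlockTriangular b) (h : ∀ i j, b i = b j → M i j = N i j) : M.det = N.det := by
  rw [hM.det, hN.det]
  refine prod_congr rfl fun a _ => congrArg det (Matrix.ext fun i j => ?_)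
  exact h i j (i.2.trans j.2.symm)

theorem transvection_pow_char {σ K : Type*} [Fintype σ] [DecidableEq σ] [Field K] {p : ℕ}
    [CharP K p] {i j : σ} (hij : i ≠ j) (c : K) : transvection i j c ^ p = 1 := by
  have h : ∀ m : ℕ, transvection i j c ^ m = transvection i j (m * c) := fun m => by
    induction m with
    | zero => simp [transvection_zero]
    | succ m ih =>
      rw [pow_succ, ih, transvection_mul_transvection_same _ _ hij]
      push_cast
      ring_nf
  rw [h, CharP.cast_eq_zero, zero_mul, transvection_zero]

end Matrix

theorem Subalgebra.det_mul_mem_of_span_eq_top {R B : Type*} [CommRing R] [CommRing B]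
    [Algebra R B] {A T : Subalgebra R B} (hAT : A ≤ T) {ι : Type*} [Fintype ι] [DecidableEq ι]
    {v w : ι → B} (hv : Submodule.span A (Set.range v) = ⊤) (hw : ∀ a, w a ∈ T)
    (M : Matrix ι ι A) (hM : w = M.map ((↑) : A → B) *ᵥ v) (g : B) : (M.det : B) * g ∈ T := by
  have hadj : M.adjugate.map ((↑) : A → B) = (M.map ((↑) : A → B)).adjugate :=
    (A.val : A →+* B).map_adjugate M
  have hdet : (M.det : B) = (M.map ((↑) : A → B)).det := (A.val : A →+* B).map_det M
  have hdet_v : ∀ b, (M.det : B) * v b ∈ T := by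
    intro b
    have h := congrFun (congrArg (M.adjugate.map ((↑) : A → B) *ᵥ ·) hM) b
    rw [mulVec_mulVec, hadj, adjugate_mul, smul_mulVec, one_mulVec, Pi.smul_apply, smul_eq_mul,
      ← hdet] at h
    rw [← h, ← hadj]
    exact sum_mem fun a _ => mul_mem (hAT (M.adjugate b a).2) (hw a)
  obtain ⟨c, rfl⟩ := (Submodule.mem_span_range_iff_exists_fun A).mp
    (hv ▸ Submodule.mem_top : g ∈ Submodule.span A (Set.range v))
  rw [Finset.mul_sum]
  refine sum_mem fun b _ => ?_
  rw [Subalgebra.smul_def, smul_eq_mul, mul_left_comm]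
  exact mul_mem (hAT (c b).2) (hdet_v b)

namespace MvPolynomial

variable {σ S : Type*} [CommRing S] {p : ℕ}

variable (σ S p) in
def truncIdeal : Ideal (MvPolynomial σ S) := Ideal.span (Set.range fun l => X l ^ p)

/-- `taylor g = g(X + ε)`, the `ε` being the outer variables. -/
def taylor : MvPolynomial σ S →ₐ[S] MvPolynomial σ (MvPolynomial σ S) :=
  aeval fun i => C (X i) + X i

theorem taylor_X (i : σ) : taylor (X i : MvPolynomial σ S) = C (X i) + X i := aeval_X _ _

theorem taylor_C (a : S) : taylor (C a : MvPolynomial σ S) = C (C a) := aeval_C _ _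

theorem coeff_zero_taylor (g : MvPolynomial σ S) : coeff 0 (taylor g) = g := by
  rw [← constantCoeff_eq]
  induction g using MvPolynomial.induction_on with
  | C a => rw [taylor_C, constantCoeff_C]
  | add f g hf hg => rw [map_add, map_add, hf, hg]
  | mul_X f i hf =>
    rw [map_mul, map_mul, hf, taylor_X, map_add, constantCoeff_C, constantCoeff_X, add_zero]

theorem coeff_single_taylor (l : σ) (g : MvPolynomial σ S) :
    coeff (Finsupp.single l 1) (taylor g) = pderiv l g := by
  classical
  induction g using MvPolynomial.induction_on with
  | C a =>
    rw [taylor_C, coeff_C, if_neg (Finsupp.single_ne_zero.mpr one_ne_zero).symm, pderiv_C]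
  | add f g hf hg => rw [map_add, coeff_add, hf, hg, map_add]
  | mul_X f i hf =>
    rw [map_mul, taylor_X, mul_add, coeff_add, mul_comm _ (C _), coeff_C_mul, hf, coeff_mul_X',
      Derivation.leibniz, pderiv_X]
    by_cases hil : i = l
    · subst hil
      simp [coeff_zero_taylor, add_comm]
    · simp [hil]

theorem taylor_sub_C_mem_truncIdeal [Fact p.Prime] [CharP S p] {y : MvPolynomial σ S}
    (hy : y ∈ (expand p : MvPolynomial σ S →ₐ[S] _).range) :
    taylor y - C y ∈ truncIdeal σ (MvPolynomial σ S) p := by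
  obtain ⟨g, rfl⟩ := hy
  change taylor (expand p g) - C (expand p g) ∈ _
  induction g using MvPolynomial.induction_on with
  | C a => simp
  | add f g hf hg =>
    rw [map_add, map_add, map_add, add_sub_add_comm]
    exact add_mem hf hg
  | mul_X f i hf =>
    have hXi : taylor ((X i : MvPolynomial σ S) ^ p) - C (X i ^ p) = X i ^ p := by
      rw [map_pow, taylor_X, add_pow_char, map_pow, add_sub_cancel_left]
    rw [map_mul, expand_X, map_mul, map_mul,
      show ∀ a b c d : MvPolynomial σ (MvPolynomial σ S),
        a * b - c * d = (a - c) * b + c * (b - d) from fun _ _ _ _ => by ring, hXi]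
    exact add_mem (Ideal.mul_mem_right _ _ hf)
      (Ideal.mul_mem_left _ _ (Ideal.subset_span ⟨i, rfl⟩))

def jacobianMatrix (F : σ → MvPolynomial σ S) : Matrix σ σ (MvPolynomial σ S) :=
  of fun i j => pderiv j (F i)

theorem jacobianMatrix_X [DecidableEq σ] : jacobianMatrix (X : σ → MvPolynomial σ S) = 1 := by
  ext i j
  simp [jacobianMatrix, one_apply, Pi.single_apply]

theorem mem_idealOfVars_sq_of_coeff {f : MvPolynomial σ S} (h0 : coeff 0 f = 0)
    (h1 : ∀ l, coeff (Finsupp.single l 1) f = 0) : f ∈ idealOfVars σ S ^ 2 := by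
  refine (mem_pow_idealOfVars_iff' 2 f).mpr fun x hx => ?_
  rcases (show x.degree = 0 ∨ x.degree = 1 by omega) with h | h
  · rw [(Finsupp.degree_eq_zero_iff x).mp h, h0]
  · obtain ⟨l, rfl⟩ : x ∈ Set.range fun l => Finsupp.single l 1 := Finsupp.range_single_one ▸ h
    exact h1 l

section Reduced

variable [Fintype σ]

def reducedExp (c : σ → Fin p) : σ →₀ ℕ := Finsupp.equivFunOnFinite.symm fun i => c i

@[simp] theorem reducedExp_apply (c : σ → Fin p) (i : σ) : reducedExp c i = c i := rfl

theorem reducedExp_injective : Function.Injective (reducedExp : (σ → Fin p) → σ →₀ ℕ) := by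
  intro a b h
  funext i
  exact Fin.ext (DFunLike.congr_fun h i)

theorem exists_reducedExp_eq {m : σ →₀ ℕ} (hm : ∀ l, m l < p) :
    ∃ c : σ → Fin p, reducedExp c = m :=
  ⟨fun l => ⟨m l, hm l⟩, Finsupp.ext fun _ => rfl⟩

theorem prod_X_pow_eq_monomial_reducedExp (c : σ → Fin p) :
    ∏ j, (X j : MvPolynomial σ S) ^ (c j : ℕ) = monomial (reducedExp c) 1 := by
  rw [monomial_eq, C_1, one_mul, Finsupp.prod_fintype _ _ fun _ => pow_zero _]
  rfl

theorem mem_truncIdeal_iff {f : MvPolynomial σ S} :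
    f ∈ truncIdeal σ S p ↔ ∀ c : σ → Fin p, coeff (reducedExp c) f = 0 := by
  have : truncIdeal σ S p =
      Ideal.span ((fun s => monomial s (1 : S)) '' Set.range fun l => Finsupp.single l p) := by
    simp_rw [truncIdeal, ← Set.range_comp, Function.comp_def, X_pow_eq_monomial]
  rw [this, mem_ideal_span_monomial_image]
  simp only [mem_support_iff, Set.exists_range_iff, Finsupp.single_le_iff]
  refine ⟨fun h c => by_contra fun hc => ?_, fun h m hm => by_contra fun hlt => hm ?_⟩
  · obtain ⟨l, hl⟩ := h _ hc
    exact absurd (c l).isLt (not_lt.mpr hl)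
  · push Not at hlt
    obtain ⟨c, rfl⟩ := exists_reducedExp_eq hlt
    exact h c

theorem coeff_taylor_mul_of_mem_range_expand [Fact p.Prime] [CharP S p] {y : MvPolynomial σ S}
    (hy : y ∈ (expand p : MvPolynomial σ S →ₐ[S] _).range) (z : MvPolynomial σ S)
    (c : σ → Fin p) :
    coeff (reducedExp c) (taylor (y * z)) = y * coeff (reducedExp c) (taylor z) := by
  have h := mem_truncIdeal_iff.mp
    (Ideal.mul_mem_right (taylor z) _ (taylor_sub_C_mem_truncIdeal hy)) c
  rw [sub_mul, coeff_sub, sub_eq_zero, coeff_C_mul] at h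
  rw [map_mul, h]

theorem span_range_expand_prod_X_pow_eq_top (hp : 0 < p) :
    Submodule.span (expand p : MvPolynomial σ S →ₐ[S] _).range
      (Set.range fun b : σ → Fin p => ∏ j, (X j : MvPolynomial σ S) ^ (b j : ℕ)) = ⊤ := by
  refine Submodule.eq_top_iff'.mpr fun g => ?_
  induction g using MvPolynomial.induction_on' with
  | monomial μ r =>
    let d : σ →₀ ℕ := Finsupp.equivFunOnFinite.symm fun j => μ j / p
    let b : σ → Fin p := fun j => ⟨μ j % p, Nat.mod_lt _ hp⟩
    have hμ : monomial μ r = expand p (monomial d r) * ∏ j, X j ^ (b j : ℕ) := by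
      have hexp : p • d + reducedExp b = μ :=
        Finsupp.ext fun j => by simp [d, b, Nat.div_add_mod]
      rw [prod_X_pow_eq_monomial_reducedExp, expand_monomial, monomial_mul, mul_one, hexp]
    rw [hμ]
    exact Submodule.smul_mem _
      (⟨_, monomial d r, rfl⟩ : (expand p : MvPolynomial σ S →ₐ[S] _).range)
      (Submodule.subset_span ⟨b, rfl⟩)
  | add f g hf hg => exact add_mem hf hg

/-- For linear forms `u`, this is the matrix of the substitution `X ↦ u` on `S[X]/(X_l^p)` in the
basis of reduced monomials. -/
def powCoeffMatrix (p : ℕ) (u : σ → MvPolynomial σ S) : Matrix (σ → Fin p) (σ → Fin p) S :=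
  of fun i c => coeff (reducedExp c) (∏ j, u j ^ (i j : ℕ))

@[simp] theorem powCoeffMatrix_apply (u : σ → MvPolynomial σ S) (i c : σ → Fin p) :
    powCoeffMatrix p u i c = coeff (reducedExp c) (∏ j, u j ^ (i j : ℕ)) := rfl

theorem powCoeffMatrix_map {S' : Type*} [CommRing S'] (f : S →+* S')
    (u : σ → MvPolynomial σ S) :
    (powCoeffMatrix p u).map f = powCoeffMatrix p fun j => map f (u j) := by
  ext i c
  simp [coeff_map, ← map_pow, ← map_prod]

variable (S) in
def linForms (J : Matrix σ σ S) (j : σ) : MvPolynomial σ S := ∑ l, C (J j l) * X l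

theorem coeff_zero_linForms (J : Matrix σ σ S) (j : σ) : coeff 0 (linForms S J j) = 0 := by
  classical
  rw [linForms, coeff_sum]
  exact sum_eq_zero fun l _ => by
    rw [coeff_C_mul, coeff_X, if_neg (Finsupp.single_ne_zero.mpr one_ne_zero), mul_zero]

theorem coeff_single_linForms (J : Matrix σ σ S) (j l : σ) :
    coeff (Finsupp.single l 1) (linForms S J j) = J j l := by
  classical
  rw [linForms, coeff_sum, sum_eq_single l, coeff_C_mul, coeff_X, if_pos rfl, mul_one]
  · exact fun m _ hm => by
      rw [coeff_C_mul, coeff_X, if_neg ((Finsupp.single_left_inj one_ne_zero).not.mpr hm),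
        mul_zero]
  · simp

theorem map_linForms {S' : Type*} [CommRing S'] (f : S →+* S') (J : Matrix σ σ S) (j : σ) :
    map f (linForms S J j) = linForms S' (J.map f) j := by
  simp [linForms]

theorem aeval_linForms (J₁ J₂ : Matrix σ σ S) (j : σ) :
    aeval (linForms S J₁) (linForms S J₂ j) = linForms S (J₂ * J₁) j := by
  simp only [linForms, map_sum, map_mul, aeval_C, aeval_X, algebraMap_eq, mul_apply,
    Finset.mul_sum, Finset.sum_mul, ← mul_assoc]
  exact Finset.sum_comm

theorem linForms_mem_idealOfVars (J : Matrix σ σ S) (j : σ) :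
    linForms S J j ∈ idealOfVars σ S :=
  sum_mem fun l _ => Ideal.mul_mem_left _ _ (Ideal.subset_span ⟨l, rfl⟩)

theorem linForms_pow_mem_truncIdeal [Fact p.Prime] [CharP S p] (J : Matrix σ σ S) (j : σ) :
    linForms S J j ^ p ∈ truncIdeal σ S p := by
  rw [linForms, sum_pow_char]
  exact sum_mem fun l _ => by
    rw [mul_pow]
    exact Ideal.mul_mem_left _ _ (Ideal.subset_span ⟨l, rfl⟩)

section BinomMatrix

variable {R : Type*} [CommRing R]

def binomMatrix (p : ℕ) (F : σ → R) : Matrix (σ → Fin p) (σ → Fin p) R :=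
  of fun a i => ∏ j, ((a j : ℕ).choose (i j) : R) * F j ^ ((a j : ℕ) - i j)

theorem binomMatrix_apply_eq_zero (F : σ → R) {a i : σ → Fin p} (h : ∃ j, a j < i j) :
    binomMatrix p F a i = 0 := by
  obtain ⟨j, hj⟩ := h
  exact prod_eq_zero (mem_univ j) (by rw [Nat.choose_eq_zero_of_lt hj, Nat.cast_zero, zero_mul])

theorem det_binomMatrix [DecidableEq σ] (F : σ → R) : (binomMatrix p F).det = 1 := by
  have hzero : ∀ a i : σ → Fin p, (∃ j, a j < i j) → binomMatrix p F a i = 0 :=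
    fun _ _ => binomMatrix_apply_eq_zero F
  refine ((BlockTriangular.det_eq_of_blocks_eq (b := fun a => OrderDual.toDual (∑ j, (a j : ℕ)))
    ?_ blockTriangular_one) fun a i hai => ?_).trans det_one
  · intro a i hia
    refine hzero _ _ (not_forall_not.mp fun hle => ?_)
    exact (OrderDual.toDual_lt_toDual.mp hia).not_ge (sum_le_sum fun j _ => not_lt.mp (hle j))
  · by_cases hlt : ∃ j, a j < i j
    · rw [hzero a i hlt, one_apply_ne]
      rintro rfl
      exact hlt.elim fun j hj => hj.false
    · push Not at hlt
      have hsum := (sum_eq_sum_iff_of_le fun j _ => Fin.val_le_of_le (hlt j)).mp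
        (by simpa using hai.symm)
      obtain rfl : i = a := _root_.funext fun j => Fin.ext (hsum j (mem_univ j))
      simp [binomMatrix]

end BinomMatrix

variable (p) in
def taylorMatrix (F : σ → MvPolynomial σ S) :
    Matrix (σ → Fin p) (σ → Fin p) (MvPolynomial σ S) :=
  of fun a c => coeff (reducedExp c) (taylor (∏ j, F j ^ (a j : ℕ)))

variable [DecidableEq σ]

theorem sub_sum_monomial_mem_truncIdeal (f : MvPolynomial σ S) :
    f - ∑ b : σ → Fin p, monomial (reducedExp b) (coeff (reducedExp b) f) ∈
      truncIdeal σ S p := by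
  refine mem_truncIdeal_iff.mpr fun c => ?_
  rw [coeff_sub, coeff_sum, Finset.sum_eq_single c, coeff_monomial, if_pos rfl, sub_self]
  · exact fun b _ hb => by rw [coeff_monomial, if_neg (reducedExp_injective.ne hb)]
  · simp

theorem powCoeffMatrix_X : powCoeffMatrix p (X : σ → MvPolynomial σ S) = 1 := by
  ext i c
  simp [prod_X_pow_eq_monomial_reducedExp, coeff_monomial, one_apply, reducedExp_injective.eq_iff]

theorem powCoeffMatrix_aeval {u v : σ → MvPolynomial σ S}
    (hv : ∀ l, v l ^ p ∈ truncIdeal σ S p) :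
    powCoeffMatrix p (fun j => aeval v (u j)) = powCoeffMatrix p u * powCoeffMatrix p v := by
  have hle : (truncIdeal σ S p).map (aeval v) ≤ truncIdeal σ S p := by
    nth_rewrite 1 [truncIdeal]
    rw [Ideal.map_span, Ideal.span_le, ← Set.range_comp, Set.range_subset_iff]
    simpa using hv
  refine Matrix.ext fun i c => ?_
  have h := mem_truncIdeal_iff.mp
    (hle (Ideal.mem_map_of_mem _ (sub_sum_monomial_mem_truncIdeal (∏ j, u j ^ (i j : ℕ))))) c
  rw [map_sub, coeff_sub, sub_eq_zero, map_sum, coeff_sum] at h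
  rw [mul_apply, powCoeffMatrix_apply]
  simp_rw [← map_pow, ← map_prod]
  rw [h]
  refine Finset.sum_congr rfl fun b _ => ?_
  rw [aeval_monomial, Finsupp.prod_fintype _ _ fun _ => pow_zero _, algebraMap_eq, coeff_C_mul]
  rfl

theorem det_powCoeffMatrix_eq_of_sub_mem_sq {u v : σ → MvPolynomial σ S}
    (hv : ∀ j, v j ∈ idealOfVars σ S) (huv : ∀ j, u j - v j ∈ idealOfVars σ S ^ 2) :
    (powCoeffMatrix p u).det = (powCoeffMatrix p v).det := by
  have hu : ∀ j, u j ∈ idealOfVars σ S := fun j => by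
    simpa using add_mem (Ideal.pow_le_self two_ne_zero (huv j)) (hv j)
  have hdeg : ∀ c : σ → Fin p, (reducedExp c).degree = ∑ j, (c j : ℕ) := fun c => by
    simp [Finsupp.degree_eq_sum]
  have htri : ∀ w : σ → MvPolynomial σ S, (∀ j, w j ∈ idealOfVars σ S) →
      (powCoeffMatrix p w).BlockTriangular fun i => ∑ j, (i j : ℕ) := fun w hw i c hci =>
    (mem_pow_idealOfVars_iff' _ _).mp (Ideal.prod_pow_mem_pow_sum (fun j _ => hw j) _) _
      (by rwa [hdeg])
  refine (htri u hu).det_eq_of_blocks_eq (htri v hv) fun i c hic => ?_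
  have h := (mem_pow_idealOfVars_iff' _ _).mp
    (Ideal.prod_pow_sub_prod_pow_mem_pow_sum_succ (fun j _ => hv j) (fun j _ => huv j)
      fun j => (i j : ℕ)) (reducedExp c) (by rw [hdeg, hic]; omega)
  rwa [coeff_sub, sub_eq_zero] at h

theorem linForms_one : linForms S (1 : Matrix σ σ S) = X := by
  ext1 j
  simp [linForms, one_apply]

theorem linForms_diagonal (d : σ → S) (j : σ) : linForms S (diagonal d) j = C (d j) * X j := by
  simp [linForms, diagonal_apply, apply_ite C, ite_mul]

theorem powCoeffMatrix_linForms_mul [Fact p.Prime] [CharP S p] (J₁ J₂ : Matrix σ σ S) :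
    powCoeffMatrix p (linForms S (J₂ * J₁)) =
      powCoeffMatrix p (linForms S J₂) * powCoeffMatrix p (linForms S J₁) := by
  rw [← powCoeffMatrix_aeval (linForms_pow_mem_truncIdeal J₁)]
  simp_rw [aeval_linForms]

theorem powCoeffMatrix_linForms_pow [Fact p.Prime] [CharP S p] (J : Matrix σ σ S) (m : ℕ) :
    powCoeffMatrix p (linForms S (J ^ m)) = powCoeffMatrix p (linForms S J) ^ m := by
  induction m with
  | zero => rw [pow_zero, pow_zero, linForms_one, powCoeffMatrix_X]
  | succ m ih => rw [pow_succ, pow_succ, powCoeffMatrix_linForms_mul, ih]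

theorem powCoeffMatrix_linForms_diagonal (d : σ → S) :
    powCoeffMatrix p (linForms S (diagonal d)) = diagonal fun e => ∏ j, d j ^ (e j : ℕ) := by
  ext i c
  simp_rw [powCoeffMatrix_apply, linForms_diagonal, mul_pow, prod_mul_distrib, ← map_pow,
    ← map_prod, prod_X_pow_eq_monomial_reducedExp, coeff_C_mul, coeff_monomial,
    reducedExp_injective.eq_iff, diagonal_apply]
  split_ifs <;> simp_all

theorem det_powCoeffMatrix_linForms_transvection {K : Type*} [Field K] [Fact p.Prime] [CharP K p]
    (t : TransvectionStruct σ K) : (powCoeffMatrix p (linForms K t.toMatrix)).det = 1 := by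
  -- a transvection has order `p`, and `x ↦ x ^ p` is injective
  refine frobenius_inj K p ?_
  rw [frobenius_def, frobenius_def, one_pow, ← det_pow, ← powCoeffMatrix_linForms_pow,
    TransvectionStruct.toMatrix, transvection_pow_char t.hij, linForms_one, powCoeffMatrix_X,
    det_one]

theorem det_powCoeffMatrix_linForms_of_field {K : Type*} [Field K] [Fact p.Prime] [CharP K p]
    (J : Matrix σ σ K) :
    (powCoeffMatrix p (linForms K J)).det = J.det ^ (p ^ Fintype.card σ * (p - 1) / 2) := by
  induction J using diagonal_transvection_induction with
  | hdiag d _ =>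
    rw [powCoeffMatrix_linForms_diagonal, det_diagonal, det_diagonal, prod_comm, ← prod_pow]
    simp_rw [Finset.prod_pow_eq_pow_sum, sum_val_apply_eq]
  | htransvec t =>
    rw [det_powCoeffMatrix_linForms_transvection, TransvectionStruct.det, one_pow]
  | hmul A B hA hB => rw [powCoeffMatrix_linForms_mul, det_mul, hA, hB, det_mul, mul_pow]

theorem det_powCoeffMatrix_linForms [IsDomain S] [Fact p.Prime] [CharP S p] (J : Matrix σ σ S) :
    (powCoeffMatrix p (linForms S J)).det = J.det ^ (p ^ Fintype.card σ * (p - 1) / 2) := by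
  have hinj := IsFractionRing.injective S (FractionRing S)
  have : CharP (FractionRing S) p := charP_of_injective_algebraMap hinj p
  apply hinj
  rw [map_pow, RingHom.map_det, RingHom.map_det, RingHom.mapMatrix_apply,
    RingHom.mapMatrix_apply, powCoeffMatrix_map]
  simp_rw [map_linForms]
  exact det_powCoeffMatrix_linForms_of_field _

theorem det_powCoeffMatrix_taylor_sub_C (F : σ → MvPolynomial σ S) :
    (powCoeffMatrix p fun j => taylor (F j) - C (F j)).det =
      (powCoeffMatrix p (linForms (MvPolynomial σ S) (jacobianMatrix F))).det := by
  refine det_powCoeffMatrix_eq_of_sub_mem_sq (linForms_mem_idealOfVars _) fun j => ?_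
  refine mem_idealOfVars_sq_of_coeff ?_ fun l => ?_
  · rw [coeff_sub, coeff_sub, coeff_zero_taylor, coeff_C, if_pos rfl, coeff_zero_linForms,
      sub_self, sub_zero]
  · rw [coeff_sub, coeff_sub, coeff_single_taylor, coeff_C,
      if_neg (Finsupp.single_ne_zero.mpr one_ne_zero).symm, coeff_single_linForms]
    simp [jacobianMatrix]

theorem taylorMatrix_eq_binomMatrix_mul (F : σ → MvPolynomial σ S) :
    taylorMatrix p F =
      binomMatrix p F * powCoeffMatrix p fun j => taylor (F j) - C (F j) := by
  refine Matrix.ext fun a c => ?_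
  have hexp : taylor (∏ j, F j ^ (a j : ℕ)) = ∑ i : σ → Fin p,
      C (binomMatrix p F a i) * ∏ j, (taylor (F j) - C (F j)) ^ (i j : ℕ) := by
    simp_rw [map_prod, map_pow]
    conv_lhs => enter [2, j]; rw [← add_sub_cancel (C (F j)) (taylor (F j)),
      add_pow_eq_sum_fin _ _ (a j).isLt]
    rw [Fintype.prod_sum]
    refine sum_congr rfl fun i _ => ?_
    simp [binomMatrix, prod_mul_distrib, map_prod, mul_assoc]
  simp_rw [taylorMatrix, of_apply, hexp, coeff_sum, coeff_C_mul, mul_apply, powCoeffMatrix_apply]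

theorem taylorMatrix_eq_map_mul [Fact p.Prime] [CharP S p] {F : σ → MvPolynomial σ S}
    (M : Matrix (σ → Fin p) (σ → Fin p) (expand p : MvPolynomial σ S →ₐ[S] _).range)
    (hM : (fun a => ∏ j, F j ^ (a j : ℕ)) = M.map (↑) *ᵥ fun b => ∏ j, X j ^ (b j : ℕ)) :
    taylorMatrix p F = M.map (↑) * taylorMatrix p X := by
  refine Matrix.ext fun a c => ?_
  simp_rw [taylorMatrix, of_apply, congrFun hM a, mul_apply, mulVec, dotProduct, map_sum,
    coeff_sum]
  exact sum_congr rfl fun b _ => coeff_taylor_mul_of_mem_range_expand (M a b).2 _ c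

theorem det_taylorMatrix [IsDomain S] [Fact p.Prime] [CharP S p] (F : σ → MvPolynomial σ S) :
    (taylorMatrix p F).det = (jacobianMatrix F).det ^ (p ^ Fintype.card σ * (p - 1) / 2) := by
  rw [taylorMatrix_eq_binomMatrix_mul, det_mul, det_binomMatrix, one_mul,
    det_powCoeffMatrix_taylor_sub_C, det_powCoeffMatrix_linForms]

theorem det_eq_det_jacobianMatrix_pow [IsDomain S] [Fact p.Prime] [CharP S p]
    {F : σ → MvPolynomial σ S}
    (M : Matrix (σ → Fin p) (σ → Fin p) (expand p : MvPolynomial σ S →ₐ[S] _).range)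
    (hM : (fun a => ∏ j, F j ^ (a j : ℕ)) = M.map (↑) *ᵥ fun b => ∏ j, X j ^ (b j : ℕ)) :
    (M.det : MvPolynomial σ S) = (jacobianMatrix F).det ^ (p ^ Fintype.card σ * (p - 1) / 2) := by
  have h := congrArg det (taylorMatrix_eq_map_mul M hM)
  rw [det_mul, det_taylorMatrix, det_taylorMatrix, jacobianMatrix_X, det_one, one_pow,
    mul_one] at h
  rw [h]
  exact RingHom.map_det (expand p : MvPolynomial σ S →ₐ[S] _).range.val.toRingHom M

end Reduced

end MvPolynomial

section RXp

variable {k : Type*} [CommRing k] {n p : ℕ} (R : Subalgebra k (MvPolynomial (Fin n) k))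

theorem le_RXp : R ≤ RXp p R := fun _ hx => Algebra.subset_adjoin (Set.mem_union_left _ hx)

theorem range_expand_le_RXp : (expand p : MvPolynomial (Fin n) k →ₐ[k] _).range ≤ RXp p R := by
  rw [expand, bind₁, ← Algebra.adjoin_range_eq_range_aeval]
  exact Algebra.adjoin_mono Set.subset_union_right

end RXp

theorem jac_pow_mul_mem_RXp {k : Type*} [Field k] {p : ℕ} [Fact p.Prime] [CharP k p] {n : ℕ}
    (R : Subalgebra k (MvPolynomial (Fin n) k)) {F : Fin n → MvPolynomial (Fin n) k}
    (hF : ∀ i, F i ∈ R) (g : MvPolynomial (Fin n) k) :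
    jac F ^ (p ^ n * (p - 1) / 2) * g ∈ RXp p R := by
  have hspan := span_range_expand_prod_X_pow_eq_top (σ := Fin n) (S := k) (Fact.out : p.Prime).pos
  choose c hc using fun a : Fin n → Fin p => (Submodule.mem_span_range_iff_exists_fun _).mp
    (hspan ▸ Submodule.mem_top (x := ∏ j, F j ^ (a j : ℕ)))
  have hM : (fun a => ∏ j, F j ^ (a j : ℕ)) = (of c).map (↑) *ᵥ fun b => ∏ j, X j ^ (b j : ℕ) :=
    funext fun a => (hc a).symm
  have hdet := det_eq_det_jacobianMatrix_pow (of c) hM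
  rw [Fintype.card_fin] at hdet
  rw [jac, ← jacobianMatrix, ← hdet]
  exact Subalgebra.det_mul_mem_of_span_eq_top (range_expand_le_RXp R) hspan
    (fun a => prod_mem fun j _ => pow_mem (le_RXp R (hF j)) _) (of c) hM g

theorem stmt0_general {k : Type*} [Field k] (p : ℕ) (hp : p.Prime) [CharP k p]
    (n : ℕ) (R : Subalgebra k (MvPolynomial (Fin n) k))
    (hprinc : (jacIdeal R).IsPrincipal) :
    ∀ f ∈ jacIdeal R ^ (p ^ n * (p - 1) / 2), f ∈ RXp p R := by
  have : Fact p.Prime := ⟨hp⟩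
  intro f hf
  rw [jacIdeal, ← Ideal.span_image_pow_of_isPrincipal ?_ hprinc] at hf
  · obtain ⟨m, c, x, rfl⟩ := Submodule.mem_span_set'.mp hf
    refine sum_mem fun i _ => ?_
    obtain ⟨_, ⟨F, hF, rfl⟩, hx⟩ := (x i).2
    rw [smul_eq_mul, mul_comm, ← hx]
    exact jac_pow_mul_mem_RXp R hF _
  · exact ⟨jac 0, 0, fun _ => zero_mem R, rfl⟩

theorem stmt0 {k : Type*} [Field k] (p : ℕ) (hp : p.Prime) [CharP k p]
    (n : ℕ) (hn : 1 ≤ n) (R : Subalgebra k (MvPolynomial (Fin n) k))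
    (hprinc : (jacIdeal R).IsPrincipal) :
    ∀ f ∈ jacIdeal R ^ (p ^ n * (p - 1) / 2), f ∈ RXp p R :=
  stmt0_general p hp n R hprinc

end
end

section
/- Let R be a commutative ring, f ∈ R, and D₁,…,D_l ∈ Der(R) derivations of R (l ≥ 0). For every integer m ≥ l, the sum Σ_{k=0}^{m} C(m,k) (−f)^{m−k} · D₁D₂⋯D_l(f^k) equals 0 if m > l, and equals l! · ∏_{k=1}^{l} D_k f if m = l. -/
/-!
Write `S_T(m, x) = ∑ⱼ C(m,j) (-f)^(m-j) T(fʲ x)`, formally `T` applied to `(y - f)ᵐ x` and evaluated at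
`y = f`. Peeling the innermost derivation `d` off `T` and using `d(fʲ x) = fʲ d x + j fʲ⁻¹ x d f` together
with `j C(m,j) = m C(m-1,j-1)` gives `S_{T d}(m, x) = S_T(m, d x) + m S_T(m-1, x d f)`. Since `S_1(m, x)` is
`(f - f)ᵐ x`, induction on the number `l` of derivations shows that `S_T(m, x)` vanishes for `m > l` and
equals `l! x ∏ D_k f` for `m = l`.
-/

open Finset

lemma Module.End.coe_list_prod {A M : Type*} [Semiring A] [AddCommMonoid M] [Module A M]
    (L : List (Module.End A M)) : ⇑L.prod = (L.map (⇑)).foldr (· ∘ ·) id := by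
  induction L with
  | nil => rfl
  | cons T L ih => rw [List.prod_cons, Module.End.coe_mul, ih]; rfl

namespace Derivation

variable {A R : Type*} [CommSemiring A] [CommRing R] [Algebra A R]

def composite {l : ℕ} (D : Fin l → Derivation A R R) : Module.End A R :=
  (List.ofFn fun i => (D i : R →ₗ[A] R)).prod

lemma coe_composite {l : ℕ} (D : Fin l → Derivation A R R) :
    ⇑(composite D) = (List.ofFn fun i => ⇑(D i)).foldr (· ∘ ·) id := by
  rw [composite, Module.End.coe_list_prod, List.map_ofFn]
  rfl

@[simp]
lemma composite_zero (D : Fin 0 → Derivation A R R) : composite D = 1 := rfl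

lemma composite_succ {l : ℕ} (D : Fin (l + 1) → Derivation A R R) :
    composite D = composite (fun i => D i.castSucc) * (D (Fin.last l) : R →ₗ[A] R) := by
  rw [composite, List.ofFn_succ', List.prod_concat]
  rfl

def binomialSum (f : R) (T : Module.End A R) (m : ℕ) (x : R) : R :=
  ∑ j ∈ range (m + 1), (m.choose j : R) * (-f) ^ (m - j) * T (f ^ j * x)

lemma binomialSum_one (f : R) (m : ℕ) (x : R) :
    binomialSum f (1 : Module.End A R) m x = if m = 0 then x else 0 := by
  have h : binomialSum f (1 : Module.End A R) m x = (f + -f) ^ m * x := by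
    rw [binomialSum, add_pow, sum_mul]
    refine sum_congr rfl fun j _ => ?_
    rw [Module.End.one_apply]
    ring
  rw [h, add_neg_cancel]
  split_ifs with hm
  · rw [hm, pow_zero, one_mul]
  · rw [zero_pow hm, zero_mul]

lemma binomialSum_mul_derivation (f : R) (T : Module.End A R) (d : Derivation A R R)
    (m : ℕ) (x : R) :
    binomialSum f (T * (d : R →ₗ[A] R)) (m + 1) x =
      binomialSum f T (m + 1) (d x) + (m + 1) * binomialSum f T m (x * d f) := by
  have leibniz (j : ℕ) : d (f ^ j * x) = f ^ j * d x + j • (f ^ (j - 1) * (x * d f)) := by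
    simp only [leibniz, leibniz_pow, smul_eq_mul, nsmul_eq_mul]
    ring
  have split : binomialSum f (T * (d : R →ₗ[A] R)) (m + 1) x = binomialSum f T (m + 1) (d x) +
      ∑ j ∈ range (m + 2), ((m + 1).choose j : R) * (-f) ^ (m + 1 - j) *
        (j • T (f ^ (j - 1) * (x * d f))) := by
    rw [binomialSum, binomialSum, ← sum_add_distrib]
    refine sum_congr rfl fun j _ => ?_
    rw [Module.End.mul_apply, coeFn_coe, leibniz, map_add, map_nsmul, mul_add]
  have shift (j : ℕ) : ((m + 1).choose (j + 1) : R) * (-f) ^ (m + 1 - (j + 1)) *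
      ((j + 1) • T (f ^ (j + 1 - 1) * (x * d f))) =
      (m + 1) * ((m.choose j : R) * (-f) ^ (m - j) * T (f ^ j * (x * d f))) := by
    have hc : ((m : R) + 1) * m.choose j = (m + 1).choose (j + 1) * ((j : R) + 1) := by
      exact_mod_cast congrArg (Nat.cast (R := R)) (Nat.add_one_mul_choose_eq m j)
    rw [Nat.add_sub_add_right, Nat.add_sub_cancel, nsmul_eq_mul]
    push_cast
    linear_combination (-f) ^ (m - j) * T (f ^ j * (x * d f)) * hc.symm
  rw [split, sum_range_succ', zero_smul, mul_zero, add_zero, sum_congr rfl fun j _ => shift j,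
    ← mul_sum]
  rfl

theorem binomialSum_composite (f : R) {l : ℕ} (D : Fin l → Derivation A R R) {m : ℕ}
    (hlm : l ≤ m) (x : R) :
    binomialSum f (composite D) m x = if m = l then (l.factorial : R) * x * ∏ i, D i f else 0 := by
  induction l generalizing m x with
  | zero => simp [binomialSum_one]
  | succ l ih =>
    obtain ⟨n, rfl⟩ : ∃ n, m = n + 1 := ⟨m - 1, by omega⟩
    rw [composite_succ, binomialSum_mul_derivation, ih _ (by omega), if_neg (by omega), zero_add,
      ih _ (by omega)]
    by_cases hn : n = l
    · subst hn
      rw [if_pos rfl, if_pos rfl, Fin.prod_univ_castSucc, Nat.factorial_succ]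
      push_cast
      ring
    · rw [if_neg hn, if_neg (by omega), mul_zero]

end Derivation

theorem stmt2 {R : Type*} [CommRing R] (f : R) (l : ℕ)
    (D : Fin l → Derivation ℤ R R) (m : ℕ) (hlm : l ≤ m) :
    ∑ j ∈ Finset.range (m + 1), (m.choose j : R) * (-f) ^ (m - j) *
        (List.ofFn fun i : Fin l => ⇑(D i)).foldr (· ∘ ·) id (f ^ j) =
      if m = l then (l.factorial : R) * ∏ i : Fin l, D i f else 0 := by
  have h := Derivation.binomialSum_composite f D hlm 1
  simp only [Derivation.binomialSum, Derivation.coe_composite, mul_one] at h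
  exact h
end

section
/- Let k be a field of characteristic p > 0 and F, G ∈ k[X]^n. Let φ_F ∈ End(k[X]) be the algebra endomorphism sending xᵢ ↦ fᵢ, and let φ_F G = (φ_F(g₁),…,φ_F(gₙ)) ∈ k[X]^n. Then U(φ_F G) = (φ_F U(G)) · U(F), where φ_F U(G) is the matrix obtained by applying φ_F entrywise, and consequently Δ(φ_F G) = (φ_F Δ(G)) · Δ(F). -/
/-! Expanding `F^α = Σ_β U(F)_{αβ} X^β` and applying `φ_F` to `G^α = Σ_γ U(G)_{αγ} X^γ` gives
`(φ_F G)^α = Σ_γ φ_F(U(G)_{αγ}) F^γ = Σ_β (Σ_γ φ_F(U(G)_{αγ}) U(F)_{γβ}) X^β`.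
The coefficients stay in `k[X^p]`, since `φ_F (xᵢ^p) = fᵢ^p` and in characteristic `p` every `p`-th
power lies in `k[X^p] = expand p (k[X])`. Coordinates in the basis `X^β` are unique because the
monomials of `c X^β` with `c ∈ k[X^p]` have exponents `≡ β mod p`; hence
`U(φ_F G) = φ_F U(G) · U(F)`, and the determinant identity follows by multiplicativity. -/

namespace MvPolynomial

variable {σ R : Type*} [CommSemiring R]

local notation "R[X^" p "]" =>
  Algebra.adjoin R (Set.range fun i : σ => (X i : MvPolynomial σ R) ^ p)

theorem adjoin_range_X_pow_eq_range_expand (p : ℕ) : R[X^p] = (expand p).range := by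
  rw [← Algebra.map_top, ← adjoin_range_X, AlgHom.map_adjoin, ← Set.range_comp]
  simp only [Function.comp_def, expand_X]

theorem pow_mem_adjoin_range_X_pow (p : ℕ) [ExpChar R p] (f : MvPolynomial σ R) :
    f ^ p ∈ R[X^p] := by
  rw [adjoin_range_X_pow_eq_range_expand, ← map_frobenius_expand, map_expand]
  exact ⟨_, rfl⟩

theorem aeval_mem_adjoin_range_X_pow (p : ℕ) [ExpChar R p] (F : σ → MvPolynomial σ R)
    {c : MvPolynomial σ R} (hc : c ∈ R[X^p]) : aeval F c ∈ R[X^p] := by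
  have hle : R[X^p].map (aeval F) ≤ R[X^p] := by
    rw [AlgHom.map_adjoin, ← Set.range_comp]
    refine Algebra.adjoin_le (Set.range_subset_iff.2 fun i => ?_)
    simpa using pow_mem_adjoin_range_X_pow p (F i)
  exact hle ⟨c, hc, rfl⟩

theorem coeff_eq_zero_of_mem_adjoin_range_X_pow {p : ℕ} {c : MvPolynomial σ R} (hc : c ∈ R[X^p])
    {m : σ →₀ ℕ} {i : σ} (hi : ¬ p ∣ m i) : c.coeff m = 0 := by
  rw [adjoin_range_X_pow_eq_range_expand] at hc
  obtain ⟨q, rfl⟩ := hc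
  exact coeff_expand_of_not_dvd q hi

section Fintype

variable [Fintype σ]

theorem prod_X_pow_eq_monomial_equivFunOnFinite (d : σ → ℕ) :
    ∏ i, (X i : MvPolynomial σ R) ^ d i = monomial (Finsupp.equivFunOnFinite.symm d) 1 := by
  rw [monomial_eq, C_1, one_mul, Finsupp.prod_fintype _ _ fun i => pow_zero _]
  rfl

variable [DecidableEq σ] {p : ℕ}

theorem coeff_add_sum_mul_prod_X_pow {c : (σ → Fin p) → MvPolynomial σ R}
    (hc : ∀ β, c β ∈ R[X^p]) (β₀ : σ → Fin p) {m : σ →₀ ℕ} (hm : ∀ i, p ∣ m i) :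
    coeff (m + Finsupp.equivFunOnFinite.symm fun i => (β₀ i : ℕ))
      (∑ β, c β * ∏ i, X i ^ (β i : ℕ)) = coeff m (c β₀) := by
  simp only [coeff_sum, prod_X_pow_eq_monomial_equivFunOnFinite]
  rw [Finset.sum_eq_single β₀ _ (by simp), coeff_mul_monomial, mul_one]
  intro β _ hne
  obtain ⟨i, hi⟩ := Function.ne_iff.1 hne
  rw [coeff_mul_monomial']
  split_ifs with hle
  · rw [coeff_eq_zero_of_mem_adjoin_range_X_pow (hc β) (i := i), zero_mul]
    rintro ⟨s, hs⟩
    obtain ⟨t, ht⟩ := hm i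
    have hle_i := hle i
    simp only [Finsupp.coe_tsub, Finsupp.coe_add, Pi.sub_apply, Pi.add_apply,
      Finsupp.coe_equivFunOnFinite_symm] at hs hle_i
    have : (p * s + β i) % p = (p * t + β₀ i) % p := by congr 1; omega
    simp only [Nat.mul_add_mod, Nat.mod_eq_of_lt (β i).isLt, Nat.mod_eq_of_lt (β₀ i).isLt] at this
    exact hi (Fin.ext this)
  · rfl

theorem eq_of_sum_mul_prod_X_pow_eq {c d : (σ → Fin p) → MvPolynomial σ R}
    (hc : ∀ β, c β ∈ R[X^p]) (hd : ∀ β, d β ∈ R[X^p])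
    (h : ∑ β, c β * ∏ i, X i ^ (β i : ℕ) = ∑ β, d β * ∏ i, X i ^ (β i : ℕ)) : c = d := by
  funext β₀
  ext m
  by_cases hm : ∀ i, p ∣ m i
  · rw [← coeff_add_sum_mul_prod_X_pow hc β₀ hm, h, coeff_add_sum_mul_prod_X_pow hd β₀ hm]
  · obtain ⟨i, hi⟩ := not_forall.1 hm
    rw [coeff_eq_zero_of_mem_adjoin_range_X_pow (hc β₀) hi,
      coeff_eq_zero_of_mem_adjoin_range_X_pow (hd β₀) hi]

/-- The matrix `U(F)`: row `α` holds the coordinates of `F^α` in the basis `X^β` of `R[X]` over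
`R[X^p]`. -/
structure IsUMatrix (p : ℕ) (F : σ → MvPolynomial σ R)
    (U : Matrix (σ → Fin p) (σ → Fin p) (MvPolynomial σ R)) : Prop where
  mem : ∀ α β, U α β ∈ R[X^p]
  prod_pow_eq : ∀ α, ∏ i, F i ^ (α i : ℕ) = ∑ β, U α β * ∏ i, X i ^ (β i : ℕ)

variable {F G : σ → MvPolynomial σ R} {U V : Matrix (σ → Fin p) (σ → Fin p) (MvPolynomial σ R)}

theorem IsUMatrix.unique (hU : IsUMatrix p F U) (hV : IsUMatrix p F V) : U = V := by
  funext α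
  exact eq_of_sum_mul_prod_X_pow_eq (hU.mem α) (hV.mem α)
    ((hU.prod_pow_eq α).symm.trans (hV.prod_pow_eq α))

theorem IsUMatrix.comp [ExpChar R p] (hF : IsUMatrix p F U) (hG : IsUMatrix p G V) :
    IsUMatrix p (fun i => aeval F (G i)) (V.map (aeval F) * U) where
  mem α β := sum_mem fun γ _ =>
    mul_mem (aeval_mem_adjoin_range_X_pow p F (hG.mem α γ)) (hF.mem γ β)
  prod_pow_eq α := calc
    ∏ i, aeval F (G i) ^ (α i : ℕ) = aeval F (∏ i, G i ^ (α i : ℕ)) := by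
      simp only [map_prod, map_pow]
    _ = ∑ γ, aeval F (V α γ) * ∏ i, F i ^ (γ i : ℕ) := by
      simp only [hG.prod_pow_eq, map_sum, map_mul, map_prod, map_pow, aeval_X]
    _ = ∑ γ, aeval F (V α γ) * ∑ β, U γ β * ∏ i, X i ^ (β i : ℕ) := by
      simp only [hF.prod_pow_eq]
    _ = ∑ β, (V.map (aeval F) * U) α β * ∏ i, X i ^ (β i : ℕ) := by
      simp only [Matrix.mul_apply, Matrix.map_apply, Finset.mul_sum, Finset.sum_mul, mul_assoc]
      exact Finset.sum_comm

end Fintype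

end MvPolynomial

open MvPolynomial

theorem stmt5 {k : Type*} [Field k] (p : ℕ) (hp : p.Prime) [CharP k p] (n : ℕ)
    (F G : Fin n → MvPolynomial (Fin n) k)
    (UF UG UFG : Matrix (Fin n → Fin p) (Fin n → Fin p) (MvPolynomial (Fin n) k))
    -- U(F): entries in k[X^p], with F^α = Σ_β U(F)_{αβ} X^β
    (hUFmem : ∀ α β, UF α β ∈
      Algebra.adjoin k (Set.range fun i : Fin n => (X i : MvPolynomial (Fin n) k) ^ p))
    (hUF : ∀ α : Fin n → Fin p,
      ∏ i : Fin n, F i ^ (α i : ℕ) = ∑ β : Fin n → Fin p, UF α β * ∏ i : Fin n, X i ^ (β i : ℕ))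
    -- U(G)
    (hUGmem : ∀ α β, UG α β ∈
      Algebra.adjoin k (Set.range fun i : Fin n => (X i : MvPolynomial (Fin n) k) ^ p))
    (hUG : ∀ α : Fin n → Fin p,
      ∏ i : Fin n, G i ^ (α i : ℕ) = ∑ β : Fin n → Fin p, UG α β * ∏ i : Fin n, X i ^ (β i : ℕ))
    -- U(φ_F G), where φ_F G = (φ_F g₁, …, φ_F gₙ)
    (hUFGmem : ∀ α β, UFG α β ∈
      Algebra.adjoin k (Set.range fun i : Fin n => (X i : MvPolynomial (Fin n) k) ^ p))
    (hUFG : ∀ α : Fin n → Fin p,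
      ∏ i : Fin n, (aeval F (G i)) ^ (α i : ℕ) =
        ∑ β : Fin n → Fin p, UFG α β * ∏ i : Fin n, X i ^ (β i : ℕ)) :
    UFG = UG.map (aeval F) * UF ∧ UFG.det = aeval F UG.det * UF.det := by
  have : ExpChar k p := ExpChar.prime hp
  have hU : UFG = UG.map (aeval F) * UF :=
    IsUMatrix.unique ⟨hUFGmem, hUFG⟩ (IsUMatrix.comp ⟨hUFmem, hUF⟩ ⟨hUGmem, hUG⟩)
  refine ⟨hU, ?_⟩
  rw [hU, Matrix.det_mul, AlgHom.map_det]
  rfl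
end

section
/- Let k be a field of characteristic p > 0 and n ≥ 1. Let Q be the p^n × p^n matrix over k[X] = k[x₁,…,xₙ] indexed by multiindices α,β ∈ [0,p−1]^n with entries Q_{αβ} = ∂^α X^β, where ∂^α = ∂₁^{α₁}⋯∂ₙ^{αₙ} is the composite of partial derivatives and X^β = ∏ᵢ xᵢ^{βᵢ}. Then det Q = c_p^n, where c_p = ∏_{k=1}^{p−1} k! (a nonzero element of k). -/
/-!
`∂^α X^β = (∏ᵢ βᵢ (βᵢ - 1) ⋯ (βᵢ - αᵢ + 1)) X^(β - α)` vanishes unless `α ≤ β` componentwise, so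
`Q` is triangular with respect to any linear extension of the componentwise order, with diagonal
entries `α! = ∏ᵢ αᵢ!`. Each value `a < p` occurs `p^(n-1)` times in each of the `n` coordinates,
so `det Q = ((∏_{a<p} a!)^(p^(n-1)))^n`, and raising to the power `p^(n-1)` fixes the prime field.
-/

open MvPolynomial Finset

theorem Matrix.det_eq_prod_diag_of_forall_not_le {ι R : Type*} [Fintype ι] [DecidableEq ι]
    [PartialOrder ι] [CommRing R] (M : Matrix ι ι R) (h : ∀ i j, ¬i ≤ j → M i j = 0) :
    M.det = ∏ i, M i i := by
  let e : LinearExtension ι ≃ ι := Equiv.refl ι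
  let : Fintype (LinearExtension ι) := ‹Fintype ι›
  let : DecidableEq (LinearExtension ι) := ‹DecidableEq ι›
  rw [← det_submatrix_equiv_self e, det_of_isUpperTriangular]
  · rfl
  · exact fun i j hji => h _ _ fun hij => (toLinearExtension.monotone hij).not_gt hji

theorem Fintype.prod_pi_apply {ι κ M : Type*} [DecidableEq ι] [Fintype ι] [Fintype κ]
    [CommMonoid M] (g : κ → M) (i : ι) :
    ∏ α : ι → κ, g (α i) = (∏ a, g a) ^ card κ ^ (card ι - 1) := by
  classical
  rw [← piFinset_univ, prod_comp, eval_image_piFinset_const, ← Finset.prod_pow]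
  refine Finset.prod_congr rfl fun a _ => ?_
  rw [card_filter_piFinset_const_eq_of_mem _ _ (mem_univ a), card_univ]

theorem Fin.prod_factorial_eq_prod_Icc (p : ℕ) :
    ∏ a : Fin p, (a : ℕ).factorial = ∏ j ∈ Icc 1 (p - 1), j.factorial := by
  cases p with
  | zero => rfl
  | succ p =>
    rw [prod_univ_eq_prod_range Nat.factorial, range_eq_Ico,
      prod_eq_prod_Ico_succ_bot (Nat.add_one_pos p), Nat.factorial_zero, one_mul, zero_add,
      Nat.add_sub_cancel, Ico_add_one_right_eq_Icc]

namespace MvPolynomial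

open Finsupp

section

variable {R σ : Type*} [CommSemiring R]

theorem iterate_pderiv_monomial (i : σ) (a : ℕ) (s : σ →₀ ℕ) (c : R) :
    (⇑(pderiv i))^[a] (monomial s c) = monomial (s - single i a) (c * (s i).descFactorial a) := by
  induction a with
  | zero => simp
  | succ a ih =>
    rw [Function.iterate_succ_apply', ih, pderiv_monomial, tsub_tsub, ← single_add, tsub_apply,
      single_eq_same, Nat.descFactorial_succ, mul_assoc, Nat.cast_mul,
      mul_comm ((s i - a : ℕ) : R)]

theorem foldr_iterate_pderiv_monomial [DecidableEq σ] (α : σ → ℕ) {l : List σ}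
    (hl : l.Nodup) (s : σ →₀ ℕ) (c : R) :
    (l.map fun i => (⇑(pderiv i))^[α i]).foldr (· ∘ ·) id (monomial s c) =
      monomial (s - ∑ i ∈ l.toFinset, single i (α i))
        (c * ∏ i ∈ l.toFinset, ((s i).descFactorial (α i) : R)) := by
  induction l with
  | nil => simp
  | cons j l ih =>
    obtain ⟨hjl, hl⟩ := List.nodup_cons.mp hl
    have hj : j ∉ l.toFinset := List.mem_toFinset.not.mpr hjl
    have hsj : (s - ∑ i ∈ l.toFinset, single i (α i)) j = s j := by
      simp [single_apply, hj]
    rw [List.map_cons, List.foldr_cons, Function.comp_apply, ih hl, iterate_pderiv_monomial, hsj,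
      List.toFinset_cons, sum_insert hj, prod_insert hj, tsub_tsub, add_comm]
    congr 1
    ring

end

section

variable {R : Type*} [CommSemiring R] {n : ℕ}

/-- `∂^α = ∂₀^α₀ ∘ ⋯ ∘ ∂ₙ₋₁^αₙ₋₁`. -/
noncomputable def iteratedPDeriv (α : Fin n → ℕ) :
    MvPolynomial (Fin n) R → MvPolynomial (Fin n) R :=
  (List.ofFn fun i => (⇑(pderiv i))^[α i]).foldr (· ∘ ·) id

theorem iteratedPDeriv_prod_X_pow (α β : Fin n → ℕ) :
    iteratedPDeriv α (∏ i, X i ^ β i : MvPolynomial (Fin n) R) =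
      monomial (∑ i, single i (β i) - ∑ i, single i (α i))
        (∏ i, ((β i).descFactorial (α i) : R)) := by
  simp_rw [X_pow_eq_monomial, ← monomial_sum_one]
  rw [iteratedPDeriv, List.ofFn_eq_map, foldr_iterate_pderiv_monomial _ (List.nodup_finRange n),
    List.toFinset_finRange, one_mul]
  simp [single_apply]

theorem iteratedPDeriv_prod_X_pow_self (α : Fin n → ℕ) :
    iteratedPDeriv α (∏ i, X i ^ α i : MvPolynomial (Fin n) R) =
      C (∏ i, ((α i).factorial : R)) := by
  simp [iteratedPDeriv_prod_X_pow, Nat.descFactorial_self]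

theorem iteratedPDeriv_prod_X_pow_eq_zero {α β : Fin n → ℕ} (h : ¬α ≤ β) :
    iteratedPDeriv α (∏ i, X i ^ β i : MvPolynomial (Fin n) R) = 0 := by
  obtain ⟨i, hi⟩ : ∃ i, β i < α i := by simpa [Pi.le_def] using h
  rw [iteratedPDeriv_prod_X_pow, prod_eq_zero (mem_univ i), map_zero]
  rw [Nat.descFactorial_eq_zero_iff_lt.mpr hi, Nat.cast_zero]

end

theorem det_iteratedPDeriv_prod_X_pow {R : Type*} [CommRing R] (n p : ℕ) :
    (Matrix.of fun α β : Fin n → Fin p =>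
        iteratedPDeriv (fun i => (α i : ℕ))
          (∏ i, (X i : MvPolynomial (Fin n) R) ^ (β i : ℕ))).det =
      C (((∏ a : Fin p, ((a : ℕ).factorial : R)) ^ p ^ (n - 1)) ^ n) := by
  rw [Matrix.det_eq_prod_diag_of_forall_not_le _ fun α β => iteratedPDeriv_prod_X_pow_eq_zero]
  simp_rw [Matrix.of_apply, iteratedPDeriv_prod_X_pow_self, ← map_prod]
  rw [Finset.prod_comm]
  simp_rw [Fintype.prod_pi_apply (fun a : Fin p => ((a : ℕ).factorial : R)), prod_const,
    card_univ, Fintype.card_fin]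

end MvPolynomial

theorem stmt7_general {k : Type*} [Field k] (p : ℕ) (hp : p.Prime) [CharP k p]
    (n : ℕ) :
    (Matrix.of fun α β : Fin n → Fin p =>
        (List.ofFn fun i : Fin n => (⇑(pderiv i))^[(α i : ℕ)]).foldr (· ∘ ·) id
          (∏ i : Fin n, (X i : MvPolynomial (Fin n) k) ^ (β i : ℕ))).det =
      C ((∏ j ∈ Finset.Icc 1 (p - 1), (j.factorial : k)) ^ n) := by
  have : Fact p.Prime := ⟨hp⟩
  refine (det_iteratedPDeriv_prod_X_pow n p).trans ?_
  rw [← Nat.cast_prod, ← iterateFrobenius_def, map_natCast, Fin.prod_factorial_eq_prod_Icc,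
    Nat.cast_prod]

theorem stmt7 {k : Type*} [Field k] (p : ℕ) (hp : p.Prime) [CharP k p]
    (n : ℕ) (hn : 1 ≤ n) :
    (Matrix.of fun α β : Fin n → Fin p =>
        (List.ofFn fun i : Fin n => (⇑(pderiv i))^[(α i : ℕ)]).foldr (· ∘ ·) id
          (∏ i : Fin n, (X i : MvPolynomial (Fin n) k) ^ (β i : ℕ))).det =
      C ((∏ j ∈ Finset.Icc 1 (p - 1), (j.factorial : k)) ^ n) :=
  stmt7_general p hp n
end

section
/- Let k be a field of characteristic 0 and let R = k[t−t², t−t³] be the subalgebra of the one-variable polynomial ring k[t] generated by t−t² and t−t³. Then J(R) = k[t] but R ≠ k[t]; that is, the Jacobian ideal of R (the ideal of k[t] generated by the derivatives g' for g ∈ R) is the whole ring k[t], yet R is a proper subalgebra of k[t] (in particular t ∉ R). -/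
/-! Both generators of `R = k[t - t², t - t³]` vanish at `0` and at `1`, so every element of `R`
takes the same value at `0` and `1`; `t` does not, hence `t ∉ R`. On the other hand
`1 = -(6t + 3) (t - t²)' + 4 (t - t³)'`, so the Jacobian ideal contains `1`. -/

open Polynomial

namespace Polynomial

variable {R : Type*} [CommRing R]

theorem adjoin_X_sub_X_sq_X_sub_X_pow_three_le_equalizer :
    Algebra.adjoin R ({X - X ^ 2, X - X ^ 3} : Set R[X]) ≤
      AlgHom.equalizer (aeval (0 : R)) (aeval 1) :=
  Algebra.adjoin_le (by rintro p (rfl | rfl) <;> simp)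

theorem X_notMem_adjoin_X_sub_X_sq_X_sub_X_pow_three [Nontrivial R] :
    (X : R[X]) ∉ Algebra.adjoin R ({X - X ^ 2, X - X ^ 3} : Set R[X]) := fun hX => by
  simpa using adjoin_X_sub_X_sq_X_sub_X_pow_three_le_equalizer hX

theorem one_eq_derivative_X_sub_X_sq_combination :
    (1 : R[X]) = -(6 * X + 3) * derivative (X - X ^ 2) + 4 * derivative (X - X ^ 3) := by
  simp only [derivative_sub, derivative_X, derivative_X_pow, Nat.cast_ofNat, map_ofNat]
  ring

theorem span_derivative_adjoin_X_sub_X_sq_X_sub_X_pow_three_eq_top :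
    Ideal.span {f : R[X] | ∃ g ∈ Algebra.adjoin R ({X - X ^ 2, X - X ^ 3} : Set R[X]),
      f = derivative g} = ⊤ := by
  have derivative_mem {g : R[X]} (hg : g ∈ ({X - X ^ 2, X - X ^ 3} : Set R[X])) :
      derivative g ∈ Ideal.span {f : R[X] | ∃ g ∈ Algebra.adjoin R ({X - X ^ 2, X - X ^ 3} :
        Set R[X]), f = derivative g} :=
    Ideal.subset_span ⟨g, Algebra.subset_adjoin hg, rfl⟩
  rw [Ideal.eq_top_iff_one, one_eq_derivative_X_sub_X_sq_combination]
  exact add_mem (Ideal.mul_mem_left _ _ (derivative_mem (by simp)))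
    (Ideal.mul_mem_left _ _ (derivative_mem (by simp)))

end Polynomial

theorem stmt13_general {k : Type*} [Field k] :
    Ideal.span {f : Polynomial k |
        ∃ g ∈ Algebra.adjoin k ({X - X ^ 2, X - X ^ 3} : Set (Polynomial k)),
          f = derivative g} = ⊤ ∧
    Algebra.adjoin k ({X - X ^ 2, X - X ^ 3} : Set (Polynomial k)) ≠ ⊤ ∧
    (X : Polynomial k) ∉ Algebra.adjoin k ({X - X ^ 2, X - X ^ 3} : Set (Polynomial k)) :=
  ⟨span_derivative_adjoin_X_sub_X_sq_X_sub_X_pow_three_eq_top,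
    fun h => X_notMem_adjoin_X_sub_X_sq_X_sub_X_pow_three (h ▸ Algebra.mem_top),
    X_notMem_adjoin_X_sub_X_sq_X_sub_X_pow_three⟩

theorem stmt13 {k : Type*} [Field k] [CharZero k] :
    Ideal.span {f : Polynomial k |
        ∃ g ∈ Algebra.adjoin k ({X - X ^ 2, X - X ^ 3} : Set (Polynomial k)),
          f = derivative g} = ⊤ ∧
    Algebra.adjoin k ({X - X ^ 2, X - X ^ 3} : Set (Polynomial k)) ≠ ⊤ ∧
    (X : Polynomial k) ∉ Algebra.adjoin k ({X - X ^ 2, X - X ^ 3} : Set (Polynomial k)) :=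
  stmt13_general
end
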